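/- arXiv:2407.03149 — 2 statements merged into one kernel-verified Lean document; each statement's English description precedes it below -/
import Mathlib

section
/- Let G be a group and B ≤ G' a subgroup of the commutator subgroup. Suppose that for every g ∈ G there exists c ∈ B such that the normal closure of c in B equals B and g⁻¹cg ∈ B. Then the normal closure of B in G equals the normal closure of B in G'. -/
/-- If `B ≤ G'` and for every `g ∈ G` there is `c ∈ B` whose normal closure in `B`
is all of `B` and with `g⁻¹ c g ∈ B`, then the normal closure of `B` in `G` equals
the normal closure of `B` in `G'` (viewed as a subgroup of `G`). -/
theorem normalClosure_eq_of_exists_normal_generator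
    {G : Type*} [Group G] (B : Subgroup G) (hBG' : B ≤ commutator G)
    (h : ∀ g : G, ∃ c ∈ B, (∀ hc : c ∈ B,
        Subgroup.normalClosure ({⟨c, hc⟩} : Set B) = (⊤ : Subgroup B)) ∧ g⁻¹ * c * g ∈ B) :
    Subgroup.normalClosure (B : Set G) =
      Subgroup.map (commutator G).subtype
        (Subgroup.normalClosure ((B.subgroupOf (commutator G)) : Set (commutator G))) := by
  set G' := commutator G with hG'
  set B' := B.subgroupOf G' with hB'
  set K := Subgroup.normalClosure (B' : Set G') with hK
  -- key : conjugation maps K into K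
  have key : ∀ g : G, Subgroup.map (MulAut.conjNormal g : MulAut G').toMonoidHom K ≤ K := by
    intro g
    rw [hK, Subgroup.map_normalClosure (B' : Set G') (MulAut.conjNormal g : MulAut G').toMonoidHom
      (MulAut.conjNormal g : MulAut G').surjective]
    apply Subgroup.normalClosure_le_normal
    rintro _ ⟨x, hx, rfl⟩
    -- hx : x ∈ B' , i.e. (x : G) ∈ B
    obtain ⟨c, hcB, hgen, hconj⟩ := h g⁻¹
    rw [inv_inv] at hconj
    -- ψ : B →* G' : b ↦ g b g⁻¹
    set ψ : B →* G' :=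
      ((MulAut.conjNormal g : MulAut G').toMonoidHom).comp (Subgroup.inclusion hBG') with hψ
    have hx' : (x : G) ∈ B := hx
    have hmem : (⟨(x : G), hx'⟩ : B) ∈ Subgroup.normalClosure ({⟨c, hcB⟩} : Set B) := by
      rw [hgen hcB]; trivial
    have hle : Subgroup.normalClosure ({⟨c, hcB⟩} : Set B) ≤ Subgroup.comap ψ K := by
      apply Subgroup.normalClosure_le_normal
      rintro _ rfl
      show ψ ⟨c, hcB⟩ ∈ K
      apply Subgroup.subset_normalClosure
      show (ψ ⟨c, hcB⟩ : G) ∈ B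
      have : (ψ ⟨c, hcB⟩ : G) = g * c * g⁻¹ := by
        simp [hψ, MulAut.conjNormal_apply, Subgroup.coe_inclusion]
      rw [this]; exact hconj
    have := hle hmem
    rw [Subgroup.mem_comap] at this
    have heq : ψ ⟨(x : G), hx'⟩ = (MulAut.conjNormal g : MulAut G') x := by
      apply Subtype.ext
      simp [hψ, MulAut.conjNormal_apply, Subgroup.coe_inclusion]
    rwa [heq] at this
  have hKnormal : K.Normal := Subgroup.normalClosure_normal
  have hMnormal : (Subgroup.map G'.subtype K).Normal := by
    constructor
    rintro _ ⟨x, hx, rfl⟩ g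
    refine ⟨(MulAut.conjNormal g : MulAut G') x, key g ⟨x, hx, rfl⟩, ?_⟩
    simp [MulAut.conjNormal_apply]
  apply le_antisymm
  · apply Subgroup.normalClosure_le_normal
    intro b hb
    exact ⟨⟨b, hBG' hb⟩, Subgroup.subset_normalClosure hb, rfl⟩
  · rw [Subgroup.map_le_iff_le_comap]
    apply Subgroup.normalClosure_le_normal
    intro x hx
    rw [SetLike.mem_coe, Subgroup.mem_comap]
    exact Subgroup.subset_normalClosure (hx : (x : G) ∈ B)
end

section
/- Let G be a finite germ extension of B ≤ Homeo(X). Given nontrivial B-germs (Bg₁)_{p₁}, …, (Bgₙ)_{pₙ} at distinct points p₁, …, pₙ of sing(G), there exists g ∈ G with sing(g) = {p₁, …, pₙ} such that (Bg)_{p_i} = (Bg_i)_{p_i} for all i. -/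
variable {X : Type*} [TopologicalSpace X]

/-- The group of self-homeomorphisms of `X`, where `f * g` is the composition
`f ∘ g`. -/
instance Homeomorph.instGroupOfSelf : Group (X ≃ₜ X) where
  mul f g := g.trans f
  one := Homeomorph.refl X
  inv := Homeomorph.symm
  mul_assoc a b c := by ext x; rfl
  one_mul a := by ext x; rfl
  mul_one a := by ext x; rfl
  inv_mul_cancel a := by ext x; exact a.symm_apply_apply x

/-- The set of singular points of a homeomorphism `f` relative to a base group `B`:
points having no neighborhood on which `f` agrees with an element of `B`. -/
def singSet (B : Subgroup (X ≃ₜ X)) (f : X ≃ₜ X) : Set X :=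
  {p | ¬ ∃ b ∈ B, ∃ U ∈ nhds p, Set.EqOn (⇑f) (⇑b) U}

/-- `G` is a finite germ extension of `B`: every element of `G` has finitely many
singular points, `B` is exactly the set of elements of `G` with no singular points,
and every germ of `G` at a singular point is realized by an element of `G` with a
single singular point. -/
def IsFiniteGermExtension (B G : Subgroup (X ≃ₜ X)) : Prop :=
  B ≤ G ∧
  (∀ g ∈ G, (singSet B g).Finite) ∧
  (∀ g ∈ G, (g ∈ B ↔ singSet B g = ∅)) ∧
  (∀ g ∈ G, ∀ p ∈ singSet B g,
    ∃ h ∈ G, singSet B h = {p} ∧ ∃ U ∈ nhds p, Set.EqOn (⇑h) (⇑g) U)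

lemma not_mem_singSet {B : Subgroup (X ≃ₜ X)} {f : X ≃ₜ X} {p : X} :
    p ∉ singSet B f ↔ ∃ b ∈ B, ∃ U ∈ nhds p, Set.EqOn (⇑f) (⇑b) U := by
  simp [singSet]

lemma nonsing_congr {B : Subgroup (X ≃ₜ X)} {f f' : X ≃ₜ X} {p : X} {U : Set X}
    (hU : U ∈ nhds p) (hff' : Set.EqOn (⇑f) (⇑f') U) :
    p ∉ singSet B f' → p ∉ singSet B f := by
  rw [not_mem_singSet, not_mem_singSet]
  rintro ⟨b, hb, V, hV, hfb⟩
  exact ⟨b, hb, U ∩ V, Filter.inter_mem hU hV,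
    fun x hx => (hff' hx.1).trans (hfb hx.2)⟩

lemma sing_congr {B : Subgroup (X ≃ₜ X)} {f f' : X ≃ₜ X} {p : X} {U : Set X}
    (hU : U ∈ nhds p) (hff' : Set.EqOn (⇑f) (⇑f') U) :
    p ∈ singSet B f ↔ p ∈ singSet B f' :=
  not_iff_not.mp ⟨nonsing_congr hU hff'.symm, nonsing_congr hU hff'⟩

lemma eqOn_inv {f b : X ≃ₜ X} {p : X} {U : Set X} (hU : U ∈ nhds p)
    (hfb : Set.EqOn (⇑f) (⇑b) U) :
    ∃ V ∈ nhds (f p), Set.EqOn (⇑f⁻¹) (⇑b⁻¹) V := by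
  refine ⟨(⇑f.symm) ⁻¹' U, ?_, ?_⟩
  · apply (f.symm.continuous.continuousAt).preimage_mem_nhds
    rwa [f.symm_apply_apply]
  · intro y hy
    have h2 : b (f.symm y) = y := (hfb hy).symm.trans (f.apply_symm_apply y)
    show f.symm y = b.symm y
    have h3 : b.symm y = f.symm y := by
      apply b.injective
      rw [b.apply_symm_apply, h2]
    exact h3.symm

lemma nonsing_mul_right {B : Subgroup (X ≃ₜ X)} {f b : X ≃ₜ X} {p : X} {U : Set X}
    (hb : b ∈ B) (hU : U ∈ nhds p) (hfb : Set.EqOn (⇑f) (⇑b) U) (k : X ≃ₜ X)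
    (hk : f p ∉ singSet B k) : p ∉ singSet B (k * f) := by
  rw [not_mem_singSet] at hk ⊢
  obtain ⟨b', hb', V, hV, hkb⟩ := hk
  have hfpU : f p = b p := hfb (mem_of_mem_nhds hU)
  have hVp : (⇑b) ⁻¹' V ∈ nhds p := by
    apply (b.continuous.continuousAt).preimage_mem_nhds
    rwa [← hfpU]
  refine ⟨b' * b, mul_mem hb' hb, U ∩ (⇑b) ⁻¹' V, Filter.inter_mem hU hVp, ?_⟩
  intro x hx
  show k (f x) = b' (b x)
  rw [hfb hx.1]
  exact hkb hx.2

lemma sing_mul_right {B : Subgroup (X ≃ₜ X)} {f b : X ≃ₜ X} {p : X} {U : Set X}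
    (hb : b ∈ B) (hU : U ∈ nhds p) (hfb : Set.EqOn (⇑f) (⇑b) U) (k : X ≃ₜ X) :
    p ∈ singSet B (k * f) ↔ f p ∈ singSet B k := by
  constructor
  · intro hs
    by_contra hc
    exact nonsing_mul_right hb hU hfb k hc hs
  · intro hs
    by_contra hc
    obtain ⟨V, hV, hinv⟩ := eqOn_inv hU hfb
    have key := nonsing_mul_right (inv_mem hb) hV hinv (k * f)
    rw [show (f⁻¹ : X ≃ₜ X) (f p) = p from f.symm_apply_apply p] at key
    have := key hc
    rw [show k * f * f⁻¹ = k from mul_inv_cancel_right k f] at this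
    exact this hs

lemma sing_mul_left {B : Subgroup (X ≃ₜ X)} {b : X ≃ₜ X} (hb : b ∈ B) (f : X ≃ₜ X) (p : X) :
    p ∈ singSet B (b * f) ↔ p ∈ singSet B f := by
  have key : ∀ b' ∈ B, ∀ f' : X ≃ₜ X, p ∉ singSet B f' → p ∉ singSet B (b' * f') := by
    intro b' hb' f' hns
    rw [not_mem_singSet] at hns ⊢
    obtain ⟨c, hc, U, hU, hfc⟩ := hns
    exact ⟨b' * c, mul_mem hb' hc, U, hU, fun x hx => by
      show b' (f' x) = b' (c x); rw [hfc hx]⟩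
  constructor
  · intro hs; by_contra hc
    exact key b hb f hc hs
  · intro hs; by_contra hc
    have := key b⁻¹ (inv_mem hb) (b * f) hc
    rw [inv_mul_cancel_left] at this
    exact this hs

/-- Lemma 2.3: given nontrivial `B`-germs `(Bgᵢ)_{pᵢ}` at distinct singular points
`p₁, …, pₙ`, there is `g ∈ G` whose singular set is exactly `{p₁, …, pₙ}` and whose
`B`-germ at each `pᵢ` equals `(Bgᵢ)_{pᵢ}`. -/
theorem exists_element_with_prescribed_B_germs [T2Space X]
    (B G : Subgroup (X ≃ₜ X)) (hFGE : IsFiniteGermExtension B G)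
    (n : ℕ) (g : Fin n → (X ≃ₜ X)) (hg : ∀ i, g i ∈ G)
    (p : Fin n → X) (hp : Function.Injective p)
    (hsing : ∀ i, p i ∈ singSet B (g i)) :
    ∃ g₀ ∈ G, singSet B g₀ = Set.range p ∧
      ∀ i, ∃ b ∈ B, ∃ U ∈ nhds (p i), Set.EqOn (⇑(b * g₀)) (⇑(g i)) U := by
  obtain ⟨hBG, hfin, hBiff, hger⟩ := hFGE
  induction n with
  | zero =>
      refine ⟨1, one_mem G, ?_, fun i => i.elim0⟩
      rw [(hBiff 1 (one_mem G)).mp (one_mem B)]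
      exact (Set.range_eq_empty p).symm
  | succ n ih =>
      obtain ⟨h, hhG, hsingh, U₀, hU₀, hhg⟩ :=
        hger (g (Fin.last n)) (hg (Fin.last n)) (p (Fin.last n)) (hsing (Fin.last n))
      have hns : ∀ i : Fin n, p i.castSucc ∉ singSet B h := by
        intro i
        rw [hsingh]
        intro hc
        exact (Fin.castSucc_lt_last i).ne (hp hc)
      choose bb hbb Ub hUb hEq using fun i => not_mem_singSet.mp (hns i)
      set p' : Fin n → X := fun i => h (p i.castSucc) with hp'def
      set g' : Fin n → (X ≃ₜ X) := fun i => g i.castSucc * h⁻¹ with hg'def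
      have hg' : ∀ i, g' i ∈ G := fun i => mul_mem (hg _) (inv_mem hhG)
      have hp' : Function.Injective p' := fun i j hij =>
        Fin.castSucc_injective n (hp (h.injective hij))
      have hsing' : ∀ i, p' i ∈ singSet B (g' i) := by
        intro i
        obtain ⟨V, hV, hEqInv⟩ := eqOn_inv (hUb i) (hEq i)
        have hiff := sing_mul_right (B := B) (inv_mem (hbb i)) hV hEqInv (g i.castSucc)
        rw [show g' i = g i.castSucc * h⁻¹ from rfl, hiff,
          show (h⁻¹ : X ≃ₜ X) (p' i) = p i.castSucc from h.symm_apply_apply _]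
        exact hsing i.castSucc
      obtain ⟨g₀', hg₀'G, hsingg₀', hgerm'⟩ := ih g' hg' p' hp' hsing'
      have hlast_not : h (p (Fin.last n)) ∉ Set.range p' := by
        rintro ⟨j, hj⟩
        exact (Fin.castSucc_lt_last j).ne (hp (h.injective hj))
      refine ⟨g₀' * h, mul_mem hg₀'G hhG, ?_, ?_⟩
      · ext x
        constructor
        · intro hx
          by_contra hxr
          have hxne : ∀ i : Fin (n+1), x ≠ p i := fun i hxi => hxr ⟨i, hxi.symm⟩
          have hxnsh : x ∉ singSet B h := by
            rw [hsingh]; exact fun hc => hxne (Fin.last n) hc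
          obtain ⟨c, hc, W, hW, hEqW⟩ := not_mem_singSet.mp hxnsh
          rw [sing_mul_right hc hW hEqW g₀', hsingg₀'] at hx
          obtain ⟨j, hj⟩ := hx
          exact hxne j.castSucc (h.injective hj).symm
        · rintro ⟨i, rfl⟩
          rcases Fin.eq_castSucc_or_eq_last i with ⟨j, rfl⟩ | rfl
          · rw [sing_mul_right (hbb j) (hUb j) (hEq j) g₀', hsingg₀']
            exact ⟨j, rfl⟩
          · have h1 : h (p (Fin.last n)) ∉ singSet B g₀' := by
              rw [hsingg₀']; exact hlast_not
            obtain ⟨c, hc, W, hW, hEqW⟩ := not_mem_singSet.mp h1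
            have hWp : (⇑h) ⁻¹' W ∈ nhds (p (Fin.last n)) :=
              (h.continuous.continuousAt).preimage_mem_nhds hW
            have hEqOn : Set.EqOn (⇑(g₀' * h)) (⇑(c * h)) ((⇑h) ⁻¹' W) := by
              intro x hx
              show g₀' (h x) = c (h x)
              exact hEqW hx
            rw [sing_congr hWp hEqOn, sing_mul_left hc h, hsingh]
            rfl
      · intro i
        rcases Fin.eq_castSucc_or_eq_last i with ⟨j, rfl⟩ | rfl
        · obtain ⟨b, hb, V, hV, hEqV⟩ := hgerm' j
          refine ⟨b, hb, (⇑h) ⁻¹' V,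
            (h.continuous.continuousAt).preimage_mem_nhds hV, ?_⟩
          intro x hx
          show b (g₀' (h x)) = g j.castSucc x
          calc b (g₀' (h x)) = (g' j) (h x) := hEqV hx
            _ = g j.castSucc ((h⁻¹ : X ≃ₜ X) (h x)) := rfl
            _ = g j.castSucc x := by
                rw [show (h⁻¹ : X ≃ₜ X) (h x) = x from h.symm_apply_apply x]
        · have h1 : h (p (Fin.last n)) ∉ singSet B g₀' := by
            rw [hsingg₀']; exact hlast_not
          obtain ⟨c, hc, W, hW, hEqW⟩ := not_mem_singSet.mp h1
          refine ⟨c⁻¹, inv_mem hc, U₀ ∩ (⇑h) ⁻¹' W,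
            Filter.inter_mem hU₀ ((h.continuous.continuousAt).preimage_mem_nhds hW), ?_⟩
          intro x hx
          show c⁻¹ (g₀' (h x)) = g (Fin.last n) x
          rw [hEqW hx.2,
            show (c⁻¹ : X ≃ₜ X) (c (h x)) = h x from c.symm_apply_apply _]
          exact hhg hx.1
end
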